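/- The unreduced suspension of any topological space X is a Dold space. -/

import Mathlib

open unitInterval

universe u v w

/-- A partition of unity: continuous `[0,1]`-valued maps whose pointwise sum is `1`. -/
def IsPartitionOfUnity {ι : Type*} {X : Type*} [TopologicalSpace X]
    (f : ι → X → ℝ) : Prop :=
  (∀ i, Continuous (f i)) ∧ (∀ i x, f i x ∈ Set.Icc (0 : ℝ) 1) ∧
    ∀ x, HasSum (fun i => f i x) 1

/-- A cover is numerable if it admits a subordinate partition of unity with
locally finite supports. -/
def IsNumerableCover {ι : Type*} {X : Type*} [TopologicalSpace X]
    (U : ι → Set X) : Prop :=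
  ∃ f : ι → X → ℝ, IsPartitionOfUnity f ∧
    LocallyFinite (fun i => closure (Function.support (f i))) ∧
    ∀ i, closure (Function.support (f i)) ⊆ U i

/-- `U` is ambiently contractible to `x₀`: the inclusion `U → X` is homotopic to the
constant map at `x₀`. -/
def AmbientlyContractibleTo {X : Type*} [TopologicalSpace X] (U : Set X) (x₀ : X) : Prop :=
  ContinuousMap.Homotopic
    (⟨Subtype.val, continuous_subtype_val⟩ : C(U, X))
    (ContinuousMap.const ↥U x₀)

/-- `U ⊆ X` is ambiently contractible: the inclusion `U → X` is nullhomotopic. -/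
def AmbientlyContractible {X : Type*} [TopologicalSpace X] (U : Set X) : Prop :=
  ∃ x₀ : X, AmbientlyContractibleTo U x₀

/-- A Dold space (numerably contractible space): a space admitting a numerable cover
by ambiently contractible subsets. -/
def IsDoldSpace (X : Type u) [TopologicalSpace X] : Prop :=
  ∃ (ι : Type u) (U : ι → Set X),
    (∀ x, ∃ i, x ∈ U i) ∧ IsNumerableCover U ∧ ∀ i, AmbientlyContractible (U i)

/-- The generating relation of the unreduced suspension: `X × {0}` is collapsed to one
point and `X × {1}` to another point. -/
inductive UnreducedSuspensionRel (X : Type*) :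
    (X × unitInterval) → (X × unitInterval) → Prop
  | zero (x y : X) : UnreducedSuspensionRel X (x, 0) (y, 0)
  | one (x y : X) : UnreducedSuspensionRel X (x, 1) (y, 1)

/-- The unreduced suspension of `X`. -/
def UnreducedSuspension (X : Type*) := Quot (UnreducedSuspensionRel X)

instance (X : Type*) [TopologicalSpace X] : TopologicalSpace (UnreducedSuspension X) :=
  instTopologicalSpaceQuot

open unitInterval Set Function

/-!
Let `h : Σ̂X → I` be the height `[x, t] ↦ t`. The sets `{h ≠ 1}` and `{h ≠ 0}` cover `Σ̂X`; they are
the preimages under the continuous map `h` of an open cover of the paracompact space `I`, so the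
cover is numerable. The set `{h ≠ 1}` contracts to the pole `h = 0` by sliding `[x, t]` to
`[x, (1 - s) t]`, and symmetrically for `{h ≠ 0}`. The slide is well defined because the only
collapsed fibre it meets is the one at the target pole, which it fixes, and it is continuous
because the quotient map stays a quotient map after restricting to an open set and taking the
product with the locally compact `I`. When `X` is empty there is no pole to contract to, but then
`Σ̂X` is empty and the empty cover works.
-/

section NumerableCover

variable {ι Y Z : Type*} [TopologicalSpace Y] [TopologicalSpace Z]

theorem isNumerableCover_of_isOpen [NormalSpace Y] [ParacompactSpace Y] {U : ι → Set Y}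
    (hUo : ∀ i, IsOpen (U i)) (hU : ∀ y, ∃ i, y ∈ U i) : IsNumerableCover U := by
  obtain ⟨f, hf⟩ := PartitionOfUnity.exists_isSubordinate isClosed_univ U hUo
    (fun y _ => mem_iUnion.2 (hU y))
  refine ⟨fun i => f i, ⟨fun i => (f i).continuous, fun i y => ⟨f.nonneg i y, f.le_one i y⟩,
    fun y => ?_⟩, f.locallyFinite_tsupport, hf⟩
  have hfin : HasFiniteSupport fun i => f i y := f.locallyFinite.point_finite y
  rw [← f.sum_eq_one (mem_univ y), finsum_eq_sum _ hfin]
  exact hasSum_sum_of_ne_finset_zero fun i hi => notMem_support.mp (mt hfin.mem_toFinset.mpr hi)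

theorem IsNumerableCover.preimage {U : ι → Set Y} (hU : IsNumerableCover U) {g : Z → Y}
    (hg : Continuous g) : IsNumerableCover fun i => g ⁻¹' U i := by
  obtain ⟨f, ⟨hfc, hf01, hfsum⟩, hflf, hfU⟩ := hU
  have hsupp : ∀ i, closure (support (f i ∘ g)) ⊆ g ⁻¹' closure (support (f i)) := fun i => by
    rw [support_comp_eq_preimage]
    exact hg.closure_preimage_subset _
  refine ⟨fun i => f i ∘ g, ⟨fun i => (hfc i).comp hg, fun i z => hf01 i (g z),
    fun z => hfsum (g z)⟩, (hflf.preimage_continuous hg).subset hsupp,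
    fun i => (hsupp i).trans (preimage_mono (hfU i))⟩

theorem isDoldSpace_of_isEmpty (Y : Type*) [TopologicalSpace Y] [IsEmpty Y] : IsDoldSpace Y :=
  ⟨PEmpty, PEmpty.elim, isEmptyElim, ⟨PEmpty.elim, ⟨nofun, nofun, isEmptyElim⟩,
    locallyFinite_of_finite _, nofun⟩, nofun⟩

end NumerableCover

namespace UnreducedSuspension

variable {X : Type*}

abbrev mk (p : X × I) : UnreducedSuspension X := Quot.mk _ p

def height : UnreducedSuspension X → I :=
  Quot.lift Prod.snd (by rintro _ _ (_ | _) <;> rfl)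

theorem continuous_height [TopologicalSpace X] : Continuous (height : UnreducedSuspension X → I) :=
  continuous_quot_lift _ continuous_snd

instance [IsEmpty X] : IsEmpty (UnreducedSuspension X) :=
  ⟨fun v => isEmptyElim v.out.1⟩

theorem mk_eq_mk_of_pole {t : I} (ht : t = 0 ∨ t = 1) (x y : X) : mk (x, t) = mk (y, t) := by
  rcases ht with rfl | rfl
  exacts [Quot.sound (.zero x y), Quot.sound (.one x y)]

theorem eq_or_pole_of_mk_eq_mk {a b : X × I} (h : mk a = mk b) :
    a = b ∨ a.2 = b.2 ∧ (a.2 = 0 ∨ a.2 = 1) := by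
  have hequiv : Equivalence fun a b : X × I => a = b ∨ a.2 = b.2 ∧ (a.2 = 0 ∨ a.2 = 1) :=
    ⟨fun _ => .inl rfl, by grind, by grind⟩
  refine hequiv.eqvGen_iff.1 (Relation.EqvGen.mono ?_ _ _ (Quot.eqvGen_exact h))
  rintro _ _ (_ | _) <;> simp

/-- Slides a point towards the pole at height `e` along a representative; by `contractToPole_mk`
this does not depend on the representative away from the opposite pole `σ e`. -/
noncomputable def contractToPole (e : I) (p : I × UnreducedSuspension X) :
    UnreducedSuspension X :=
  mk (p.2.out.1, Icc.convexComb p.2.out.2 e p.1)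

theorem contractToPole_mk {e : I} (he : e = 0 ∨ e = 1) {a : X × I} (ha : a.2 ≠ σ e) (s : I) :
    contractToPole e (s, mk a) = mk (a.1, Icc.convexComb a.2 e s) := by
  rcases eq_or_pole_of_mk_eq_mk (Quot.out_eq (mk a)) with h | ⟨h2, hpole⟩
  · rw [contractToPole, h]
  · have hae : a.2 = e := by
      rcases he with rfl | rfl <;> rcases hpole with h | h <;> simp_all
    have hout : (mk a).out.2 = e := h2.trans hae
    simp only [contractToPole, hout, hae, Icc.convexComb_eq]
    exact mk_eq_mk_of_pole he _ _

theorem ambientlyContractible_height_ne [TopologicalSpace X] [Nonempty X] {e : I}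
    (he : e = 0 ∨ e = 1) :
    AmbientlyContractible {v : UnreducedSuspension X | height v ≠ σ e} := by
  set V := {v : UnreducedSuspension X | height v ≠ σ e}
  have hV : IsOpen V := isOpen_ne.preimage continuous_height
  have hH : Continuous fun p : I × V => contractToPole e (p.1, (p.2 : UnreducedSuspension X)) := by
    refine (isQuotientMap_quot_mk.restrictPreimage_isOpen hV).continuous_lift_prod_right ?_
    have hmk (p : I × (mk ⁻¹' V)) :
        contractToPole e (p.1, mk p.2.1) = mk (p.2.1.1, Icc.convexComb p.2.1.2 e p.1) :=
      contractToPole_mk he p.2.2 p.1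
    show Continuous fun p : I × (mk ⁻¹' V) => contractToPole e (p.1, mk p.2.1)
    simp only [hmk]
    fun_prop
  refine ⟨mk (Classical.arbitrary X, e), ⟨⟨⟨_, hH⟩, fun v => ?_, fun v => ?_⟩⟩⟩
  · simp only [contractToPole, Icc.convexComb_zero]
    exact Quot.out_eq _
  · simpa [contractToPole] using mk_eq_mk_of_pole he _ _

end UnreducedSuspension

open UnreducedSuspension in
/-- the unreduced suspension of any space is a Dold space. -/
theorem stmt10 (X : Type u) [TopologicalSpace X] :
    IsDoldSpace (UnreducedSuspension X) := by
  cases isEmpty_or_nonempty X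
  · exact isDoldSpace_of_isEmpty _
  · have hcover (t : I) : ∃ e : ULift.{u} {e : I // e = 0 ∨ e = 1}, t ∈ {s | s ≠ σ e.down} := by
      by_cases ht : t = 0
      · exact ⟨⟨0, .inl rfl⟩, by simp [ht]⟩
      · exact ⟨⟨1, .inr rfl⟩, by simpa using ht⟩
    exact ⟨ULift.{u} {e : I // e = 0 ∨ e = 1}, fun e => {v | height v ≠ σ e.down},
      fun v => hcover (height v),
      (isNumerableCover_of_isOpen (fun _ => isOpen_ne) hcover).preimage continuous_height,
      fun e => ambientlyContractible_height_ne e.down.2⟩
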